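/- Let X ∈ ℝ^{n×n} be symmetric with eigenvalue decomposition X = Σ_{i=1}^n λ_i v_i v_iᵀ, where λ_1 ≥ λ_2 ≥ … ≥ λ_n are the eigenvalues and v_1, …, v_n form an orthonormal basis of corresponding eigenvectors. For κ ≤ n, set X̂ = Σ_{i=1}^κ max{0, λ_i} v_i v_iᵀ. Then X̂ is a projection of X onto D = {Z ∈ ℝ^{n×n} : Z symmetric positive semidefinite, rank(Z) ≤ κ} with respect to the Frobenius norm; i.e., X̂ ∈ D and ‖X̂ − X‖_F ≤ ‖Z − X‖_F for every Z ∈ D. -/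

import Mathlib

noncomputable section

open Matrix

/-- The Frobenius norm of a real matrix. -/
def frobNorm {n : ℕ} (A : Matrix (Fin n) (Fin n) ℝ) : ℝ :=
  Real.sqrt (∑ i, ∑ j, A i j ^ 2)

/-!
Conjugating by the orthogonal matrix with rows `v i` reduces the theorem to `D = diagonal lam`;
let `D₊` be its positive part. For `W ⪰ 0` the diagonal of `W` is nonnegative, so entrywise
`(W - D₊) * (D₊ - D) ≥ 0` and `‖W - D‖² ≥ ‖W - D₊‖² + ‖D₊ - D‖²`. If moreover `rank W ≤ κ`, an
orthonormal basis `u` of `ker W` has at least `n - κ` vectors, and Bessel's inequality applied to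
the rows of `W - D₊` gives `‖W - D₊‖² ≥ ∑ j, ‖D₊ u j‖² = ∑ i, (lam i)₊² p i`, with weights
`p i = ∑ j, (u j i)²` in `[0, 1]` of total mass at least `n - κ`. As `(lam i)₊²` is nonincreasing,
such a weighted sum is at least the sum of its last `n - κ` terms, which is `‖D̂ - D‖² - ‖D₊ - D‖²`
for `D̂ = diagonal (truncPosPart κ lam)`.
-/

open Finset

section Frobenius

variable {ι m n : Type*} [Fintype ι] [Fintype m] [Fintype n]

def frobSq (M : Matrix m n ℝ) : ℝ := ∑ i, ∑ j, M i j ^ 2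

theorem frobSq_eq_trace (M : Matrix m n ℝ) : frobSq M = trace (M * Mᵀ) := by
  simp [frobSq, trace, mul_apply, sq]

theorem frobSq_diagonal [DecidableEq n] (c : n → ℝ) : frobSq (diagonal c) = ∑ i, c i ^ 2 := by
  simp [frobSq, diagonal_apply]

theorem frobSq_transpose_mul_mul [DecidableEq n] {V : Matrix n n ℝ}
    (hV : V ∈ orthogonalGroup n ℝ) (M : Matrix n n ℝ) : frobSq (Vᵀ * M * V) = frobSq M := by
  rw [mem_orthogonalGroup_iff] at hV
  simp only [frobSq_eq_trace, transpose_mul, transpose_transpose, Matrix.mul_assoc]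
  rw [← Matrix.mul_assoc V, hV, Matrix.one_mul, trace_mul_comm, Matrix.mul_assoc,
    Matrix.mul_assoc, hV, Matrix.mul_one]

theorem frobSq_sub_add_frobSq_sub_le {X Y Z : Matrix m n ℝ}
    (h : ∀ i j, 0 ≤ (X i j - Y i j) * (Y i j - Z i j)) :
    frobSq (X - Y) + frobSq (Y - Z) ≤ frobSq (X - Z) := by
  simp only [frobSq, ← sum_add_distrib, Matrix.sub_apply]
  gcongr with i _ j _
  nlinarith [h i j]

theorem Orthonormal.sum_dotProduct_sq_le {u : m → EuclideanSpace ℝ ι}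
    (hu : Orthonormal ℝ u) (x : ι → ℝ) : ∑ j, ((u j).ofLp ⬝ᵥ x) ^ 2 ≤ x ⬝ᵥ x := by
  have hx : ‖(WithLp.toLp 2 x : EuclideanSpace ℝ ι)‖ ^ 2 = x ⬝ᵥ x := by
    rw [← real_inner_self_eq_norm_sq, EuclideanSpace.inner_toLp_toLp, star_trivial]
  have := hu.sum_inner_products_le (WithLp.toLp 2 x : EuclideanSpace ℝ ι) (s := univ)
  simpa [EuclideanSpace.inner_eq_star_dotProduct, dotProduct_comm, hx] using this

theorem Orthonormal.sum_sq_apply_le_one [DecidableEq ι] {u : m → EuclideanSpace ℝ ι}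
    (hu : Orthonormal ℝ u) (i : ι) : ∑ j, u j i ^ 2 ≤ 1 := by
  simpa using hu.sum_dotProduct_sq_le (Pi.single i 1)

theorem Orthonormal.sum_sum_sq_apply {u : m → EuclideanSpace ℝ ι} (hu : Orthonormal ℝ u) :
    ∑ i, ∑ j, u j i ^ 2 = Fintype.card m := by
  rw [sum_comm]
  have h : ∀ j, ∑ i, u j i ^ 2 = 1 := fun j => by
    simpa [hu.1 j] using (EuclideanSpace.norm_sq_eq (u j)).symm
  simp [h]

theorem Orthonormal.sum_mulVec_dotProduct_self_le_frobSq {u : m → EuclideanSpace ℝ ι}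
    (hu : Orthonormal ℝ u) (M : Matrix n ι ℝ) :
    ∑ j, (M *ᵥ (u j).ofLp) ⬝ᵥ (M *ᵥ (u j).ofLp) ≤ frobSq M :=
  calc ∑ j, (M *ᵥ (u j).ofLp) ⬝ᵥ (M *ᵥ (u j).ofLp)
      = ∑ r, ∑ j, ((u j).ofLp ⬝ᵥ M r) ^ 2 := by
        simp_rw [dotProduct_comm (u _).ofLp, sq]
        rw [sum_comm]
        rfl
    _ ≤ ∑ r, M r ⬝ᵥ M r := sum_le_sum fun r _ => hu.sum_dotProduct_sq_le (M r)
    _ = frobSq M := by simp [frobSq, dotProduct, sq]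

theorem Orthonormal.sum_mul_sum_sq_le_frobSq_sub_diagonal [DecidableEq ι]
    {u : m → EuclideanSpace ℝ ι} (hu : Orthonormal ℝ u) {W : Matrix ι ι ℝ}
    (hWu : ∀ j, W *ᵥ (u j).ofLp = 0) (c : ι → ℝ) :
    ∑ i, c i ^ 2 * ∑ j, u j i ^ 2 ≤ frobSq (W - diagonal c) := by
  refine le_of_eq_of_le ?_ (hu.sum_mulVec_dotProduct_self_le_frobSq (W - diagonal c))
  simp only [sub_mulVec, hWu, zero_sub, neg_dotProduct, dotProduct_neg, neg_neg]
  simp only [dotProduct, mulVec_diagonal, mul_sum]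
  rw [sum_comm]
  exact sum_congr rfl fun j _ => sum_congr rfl fun i _ => by ring

theorem Matrix.exists_orthonormal_mulVec_eq_zero [DecidableEq ι] (W : Matrix ι ι ℝ) :
    ∃ (k : ℕ) (u : Fin k → EuclideanSpace ℝ ι), Orthonormal ℝ u ∧
      (∀ j, W *ᵥ (u j).ofLp = 0) ∧ k + W.rank = Fintype.card ι := by
  let f := toEuclideanLin W
  let b := stdOrthonormalBasis ℝ (LinearMap.ker f)
  refine ⟨_, fun j => b j, b.orthonormal.comp_linearIsometry (LinearMap.ker f).subtypeₗᵢ,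
    fun j => congrArg WithLp.ofLp (b j).2, ?_⟩
  rw [rank_eq_finrank_range_toLin W (EuclideanSpace.basisFun ι ℝ).toBasis
    (EuclideanSpace.basisFun ι ℝ).toBasis, ← toEuclideanLin_eq_toLin_orthonormal, add_comm,
    LinearMap.finrank_range_add_finrank_ker f, finrank_euclideanSpace]

end Frobenius

theorem Finset.sum_le_sum_mul_of_threshold {ι : Type*} [Fintype ι] {s : Finset ι} {g p : ι → ℝ}
    {t : ℝ} (ht : 0 ≤ t) (hs : ∀ i ∈ s, g i ≤ t) (hsc : ∀ i ∉ s, t ≤ g i)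
    (hp0 : ∀ i, 0 ≤ p i) (hp1 : ∀ i, p i ≤ 1) (hp : (#s : ℝ) ≤ ∑ i, p i) :
    ∑ i ∈ s, g i ≤ ∑ i, g i * p i := by
  classical
  have key : ∀ i, (if i ∈ s then g i else 0) - g i * p i
      ≤ t * ((if i ∈ s then 1 else 0) - p i) := by
    intro i
    by_cases hi : i ∈ s
    · simp only [hi, if_true]; nlinarith [hs i hi, hp1 i]
    · simp only [hi, if_false]; nlinarith [hsc i hi, hp0 i]
  have := sum_le_sum fun i (_ : i ∈ univ) => key i
  rw [sum_sub_distrib, ← mul_sum, sum_sub_distrib, ← sum_filter, ← sum_filter] at this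
  simp only [filter_mem_eq_inter, univ_inter, sum_const, nsmul_eq_mul, mul_one] at this
  linarith [mul_le_mul_of_nonneg_left hp ht]

theorem Fin.sum_filter_le_sum_mul_of_antitone {n κ : ℕ} {g p : Fin n → ℝ} (hg : Antitone g)
    (hg0 : ∀ i, 0 ≤ g i) (hp0 : ∀ i, 0 ≤ p i) (hp1 : ∀ i, p i ≤ 1)
    (hp : ((n - κ : ℕ) : ℝ) ≤ ∑ i, p i) :
    ∑ i ∈ univ.filter (fun i : Fin n => κ ≤ (i : ℕ)), g i ≤ ∑ i, g i * p i := by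
  have hcard : #{i : Fin n | κ ≤ (i : ℕ)} = n - κ := by
    have h := card_filter_add_card_filter_not (s := univ) (fun i : Fin n => (i : ℕ) < κ)
    simp only [Fin.card_filter_val_lt, not_lt, card_univ, Fintype.card_fin] at h
    omega
  rcases lt_or_ge κ n with h | h
  · refine sum_le_sum_mul_of_threshold (t := g ⟨κ, h⟩) (hg0 _) (fun i hi => hg ?_)
      (fun i hi => hg ?_) hp0 hp1 (hcard ▸ hp)
    · exact Fin.le_def.mpr (mem_filter.mp hi).2
    · simp only [mem_filter, mem_univ, true_and, not_le] at hi
      exact Fin.le_def.mpr hi.le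
  · refine sum_le_sum_mul_of_threshold le_rfl (fun i hi => ?_) (fun i _ => hg0 i) hp0 hp1
      (hcard ▸ hp)
    simp only [mem_filter, mem_univ, true_and] at hi
    omega

def truncPosPart {n : ℕ} (κ : ℕ) (d : Fin n → ℝ) : Fin n → ℝ :=
  fun i => if (i : ℕ) < κ then max 0 (d i) else 0

theorem truncPosPart_nonneg {n : ℕ} (κ : ℕ) (d : Fin n → ℝ) : 0 ≤ truncPosPart κ d := fun i => by
  unfold truncPosPart; split_ifs <;> simp

theorem rank_diagonal_truncPosPart_le {n : ℕ} (κ : ℕ) (d : Fin n → ℝ) :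
    (diagonal (truncPosPart κ d)).rank ≤ κ := by
  classical
  calc (diagonal (truncPosPart κ d)).rank
      = Fintype.card {i // truncPosPart κ d i ≠ 0} := rank_diagonal _
    _ ≤ Fintype.card {i : Fin n // (i : ℕ) < κ} := Fintype.card_subtype_mono _ _ fun i hi => by
        by_contra h; exact hi (by simp [truncPosPart, h])
    _ ≤ κ := by rw [Fintype.card_subtype, Fin.card_filter_val_lt]; exact min_le_right _ _

theorem frobSq_diagonal_truncPosPart_sub {n : ℕ} (κ : ℕ) (d : Fin n → ℝ) :
    frobSq (diagonal (truncPosPart κ d) - diagonal d) =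
      frobSq (diagonal (fun i => max 0 (d i)) - diagonal d) +
        ∑ i ∈ univ.filter (fun i : Fin n => κ ≤ (i : ℕ)), max 0 (d i) ^ 2 := by
  simp only [diagonal_sub, frobSq_diagonal, sum_filter, ← sum_add_distrib]
  refine sum_congr rfl fun i _ => ?_
  by_cases hi : (i : ℕ) < κ
  · simp [truncPosPart, hi]
  · rcases le_total (d i) 0 with h | h <;> simp [truncPosPart, hi, h, le_of_not_gt hi]

theorem frobSq_diagonal_truncPosPart_sub_le {n κ : ℕ} {d : Fin n → ℝ} (hd : Antitone d)
    {W : Matrix (Fin n) (Fin n) ℝ} (hW : W.PosSemidef) (hWκ : W.rank ≤ κ) :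
    frobSq (diagonal (truncPosPart κ d) - diagonal d) ≤ frobSq (W - diagonal d) := by
  obtain ⟨k, u, hu, hWu, hk⟩ := W.exists_orthonormal_mulVec_eq_zero
  set dpos : Fin n → ℝ := fun i => max 0 (d i)
  have hmass : ((n - κ : ℕ) : ℝ) ≤ ∑ i, ∑ j, u j i ^ 2 := by
    rw [hu.sum_sum_sq_apply, Fintype.card_fin]
    rw [Fintype.card_fin] at hk
    exact_mod_cast (by omega : n - κ ≤ k)
  calc frobSq (diagonal (truncPosPart κ d) - diagonal d)
      = frobSq (diagonal dpos - diagonal d) +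
          ∑ i ∈ univ.filter (fun i : Fin n => κ ≤ (i : ℕ)), dpos i ^ 2 :=
        frobSq_diagonal_truncPosPart_sub κ d
    _ ≤ frobSq (diagonal dpos - diagonal d) + ∑ i, dpos i ^ 2 * ∑ j, u j i ^ 2 := by
        gcongr
        refine Fin.sum_filter_le_sum_mul_of_antitone (fun i j hij => ?_) (fun i => sq_nonneg _)
          (fun i => sum_nonneg fun j _ => sq_nonneg _) hu.sum_sq_apply_le_one hmass
        exact pow_le_pow_left₀ (le_max_left _ _) (max_le_max le_rfl (hd hij)) 2
    _ ≤ frobSq (diagonal dpos - diagonal d) + frobSq (W - diagonal dpos) := by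
        gcongr
        exact hu.sum_mul_sum_sq_le_frobSq_sub_diagonal hWu dpos
    _ ≤ frobSq (W - diagonal d) := by
        rw [add_comm]
        refine frobSq_sub_add_frobSq_sub_le fun i j => ?_
        by_cases hij : i = j
        · subst hij
          simp only [diagonal_apply_eq, dpos]
          rcases le_total (d i) 0 with h | h
          · rw [max_eq_left h]
            exact mul_nonneg (sub_nonneg.mpr hW.diag_nonneg) (by linarith)
          · rw [max_eq_right h, sub_self, mul_zero]
        · simp [hij]

theorem frobNorm_eq_sqrt_frobSq {n : ℕ} (M : Matrix (Fin n) (Fin n) ℝ) :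
    frobNorm M = √(frobSq M) := rfl

theorem frobNorm_transpose_mul_mul {n : ℕ} {V : Matrix (Fin n) (Fin n) ℝ}
    (hV : V ∈ orthogonalGroup (Fin n) ℝ) (M : Matrix (Fin n) (Fin n) ℝ) :
    frobNorm (Vᵀ * M * V) = frobNorm M := by
  rw [frobNorm_eq_sqrt_frobSq, frobSq_transpose_mul_mul hV, frobNorm_eq_sqrt_frobSq]

section Orthogonal

variable {n : Type*} [Fintype n] [DecidableEq n]

theorem Matrix.of_mem_orthogonalGroup {v : n → n → ℝ}
    (hv : ∀ i j, v i ⬝ᵥ v j = if i = j then 1 else 0) : of v ∈ orthogonalGroup n ℝ := by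
  rw [mem_orthogonalGroup_iff]
  ext i j
  simpa [mul_apply, dotProduct, one_apply] using hv i j

theorem Matrix.transpose_mul_mul_mul_transpose {V : Matrix n n ℝ}
    (hV : V ∈ orthogonalGroup n ℝ) (Z : Matrix n n ℝ) : Vᵀ * (V * Z * Vᵀ) * V = Z := by
  rw [mem_orthogonalGroup_iff'] at hV
  simp only [← Matrix.mul_assoc, hV, Matrix.one_mul]
  rw [Matrix.mul_assoc, hV, Matrix.mul_one]

end Orthogonal

theorem Matrix.transpose_of_mul_diagonal_mul_of {ι n : Type*} [Fintype ι] [DecidableEq ι] (v : ι → n → ℝ) (c : ι → ℝ) :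
    (of v)ᵀ * diagonal c * of v = ∑ i, c i • vecMulVec (v i) (v i) := by
  ext a b
  rw [mul_apply]
  simp only [mul_diagonal, vecMulVec_apply, Matrix.sum_apply, transpose_apply, of_apply,
    smul_apply, smul_eq_mul]
  exact sum_congr rfl fun i _ => by ring

theorem eigenvalue_truncation_is_psd_lowrank_projection_general
    {n : ℕ} (κ : ℕ)
    (lam : Fin n → ℝ) (v : Fin n → Fin n → ℝ)
    (hortho : ∀ i j, v i ⬝ᵥ v j = if i = j then (1 : ℝ) else 0)
    (hord : ∀ i j : Fin n, i ≤ j → lam j ≤ lam i)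
    (A : Matrix (Fin n) (Fin n) ℝ)
    (hA : A = ∑ i, lam i • vecMulVec (v i) (v i))
    (Ahat : Matrix (Fin n) (Fin n) ℝ)
    (hAhat : Ahat = ∑ i ∈ Finset.univ.filter (fun i : Fin n => (i : ℕ) < κ),
      max 0 (lam i) • vecMulVec (v i) (v i)) :
    (Ahat.PosSemidef ∧ Ahat.rank ≤ κ) ∧
      ∀ Z : Matrix (Fin n) (Fin n) ℝ, Z.PosSemidef → Z.rank ≤ κ →
        frobNorm (Ahat - A) ≤ frobNorm (Z - A) := by
  set V : Matrix (Fin n) (Fin n) ℝ := of v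
  have hV : V ∈ orthogonalGroup (Fin n) ℝ := of_mem_orthogonalGroup hortho
  have hA' : A = Vᵀ * diagonal lam * V := by rw [hA, transpose_of_mul_diagonal_mul_of]
  have hAhat' : Ahat = Vᵀ * diagonal (truncPosPart κ lam) * V := by
    rw [hAhat, transpose_of_mul_diagonal_mul_of, sum_filter]
    exact sum_congr rfl fun i _ => by by_cases hi : (i : ℕ) < κ <;> simp [truncPosPart, hi]
  refine ⟨⟨?_, ?_⟩, fun Z hZ hZκ => ?_⟩
  · rw [hAhat']
    simpa using (PosSemidef.diagonal (truncPosPart_nonneg κ lam)).conjTranspose_mul_mul_same V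
  · rw [hAhat']
    exact (rank_mul_le_left _ _).trans
      ((rank_mul_le_right _ _).trans (rank_diagonal_truncPosPart_le κ lam))
  · rw [← transpose_mul_mul_mul_transpose hV Z, hAhat', hA', ← Matrix.sub_mul, ← Matrix.mul_sub,
      ← Matrix.sub_mul, ← Matrix.mul_sub, frobNorm_transpose_mul_mul hV,
      frobNorm_transpose_mul_mul hV]
    exact Real.sqrt_le_sqrt (frobSq_diagonal_truncPosPart_sub_le hord
      (hZ.mul_mul_conjTranspose_same V)
      ((rank_mul_le_left _ _).trans ((rank_mul_le_right _ _).trans hZκ)))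

/-- for a symmetric matrix `A = Σ λ_i v_i v_iᵀ` with nonincreasing
eigenvalues and orthonormal eigenvectors, `Â = Σ_{i ≤ κ} max{0, λ_i} v_i v_iᵀ` is a
Frobenius-norm projection of `A` onto the set of symmetric positive semidefinite
matrices of rank at most `κ`. -/
theorem eigenvalue_truncation_is_psd_lowrank_projection
    {n : ℕ} (κ : ℕ) (hκ : κ ≤ n)
    (lam : Fin n → ℝ) (v : Fin n → Fin n → ℝ)
    (hortho : ∀ i j, v i ⬝ᵥ v j = if i = j then (1 : ℝ) else 0)
    (hord : ∀ i j : Fin n, i ≤ j → lam j ≤ lam i)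
    (A : Matrix (Fin n) (Fin n) ℝ)
    (hA : A = ∑ i, lam i • vecMulVec (v i) (v i))
    (Ahat : Matrix (Fin n) (Fin n) ℝ)
    (hAhat : Ahat = ∑ i ∈ Finset.univ.filter (fun i : Fin n => (i : ℕ) < κ),
      max 0 (lam i) • vecMulVec (v i) (v i)) :
    (Ahat.PosSemidef ∧ Ahat.rank ≤ κ) ∧
      ∀ Z : Matrix (Fin n) (Fin n) ℝ, Z.PosSemidef → Z.rank ≤ κ →
        frobNorm (Ahat - A) ≤ frobNorm (Z - A) :=
  eigenvalue_truncation_is_psd_lowrank_projection_general κ lam v hortho hord A hA Ahat hAhat
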